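/- Let σ be a positive n×n matrix measure on R with finite moments and infinitely many growth points. Apply the Gram–Schmidt procedure in L_2(R,σ) to the sequence of vector polynomials e_1, e_2, ..., where e_{nk+i}(z) = z^k e_i, discarding (and recording) vectors of zero norm. If at step h+1 the procedure produces a nonzero null vector polynomial q of height h, then for every l ≥ 1 the vector produced at step h+1+nl also has zero norm. -/

import Mathlib

open Polynomial

/-- The height of an `n`-dimensional vector polynomial (0-indexed components):
`h(r) = max_j (n · deg R_j + j)`, with `deg 0 = ⊥` and `h(0) = ⊥`. -/
noncomputable def height {n : ℕ} (r : Fin n → Polynomial ℂ) : WithBot ℕ :=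
  Finset.univ.sup fun j : Fin n => WithBot.map (fun d => n * d + (j : ℕ)) (r j).degree

/-- The vector polynomial `e_{nk+i}(z) = z^k e_i`; in 0-indexed form `eVP n s = z^(s/n) e_(s%n)`,
corresponding to the 1-indexed `e_{s+1}`. -/
noncomputable def eVP (n : ℕ) (s : ℕ) : Fin n → Polynomial ℂ :=
  fun j => if (j : ℕ) = s % n then X ^ (s / n) else 0

/-- A positive `n×n` matrix measure `σ` on `ℝ` with all moments finite, encoded through the
(possibly degenerate) sesquilinear form `B f g = ∫_ℝ ⟨f(t), dσ(t) g(t)⟩` it induces on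
`n`-dimensional vector polynomials (antilinear in the first argument). The axiom `mul_symm`
expresses that multiplication by the real variable `t` is symmetric for the form. -/
structure MatMeasureForm (n : ℕ) where
  B : (Fin n → Polynomial ℂ) → (Fin n → Polynomial ℂ) → ℂ
  add_right : ∀ f g h, B f (g + h) = B f g + B f h
  smul_right : ∀ (c : ℂ) f g, B f (c • g) = c * B f g
  conj_symm : ∀ f g, B g f = (starRingEnd ℂ) (B f g)
  nonneg : ∀ f, 0 ≤ (B f f).re
  mul_symm : ∀ f g, B (fun j => X * f j) g = B f (fun j => X * g j)

/-! Let `v = e_{h+nl} - Σ ⟨p_i, e_{h+nl}⟩ p_i`. Since `v ⊥ p_i`, `⟨v, v⟩ = ⟨v, e_{h+nl}⟩`.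
The vector `z^l q` has height `h + nl`, so `e_{h+nl} = c z^l q + w` with `w` of smaller height,
i.e. `w` is a combination of the `p_i` plus a null polynomial; `v` is orthogonal to both, since by
Cauchy–Schwarz a null vector is orthogonal to everything. Finally `⟨v, z^l q⟩ = ⟨z^l v, q⟩ = 0`,
because multiplication by the real variable is symmetric and `q` is null. -/

namespace MatMeasureForm

variable {n : ℕ} (M : MatMeasureForm n)

abbrev toCore : PreInnerProductSpace.Core ℂ (Fin n → ℂ[X]) where
  inner := M.B
  conj_inner_symm f g := (M.conj_symm g f).symm
  re_inner_nonneg := M.nonneg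
  add_left f g k := by rw [M.conj_symm, M.add_right, map_add, ← M.conj_symm, ← M.conj_symm]
  smul_left f g c := by rw [M.conj_symm, M.smul_right, map_mul, ← M.conj_symm]

def toLinearMap (f : Fin n → ℂ[X]) : (Fin n → ℂ[X]) →ₗ[ℂ] ℂ where
  toFun := M.B f
  map_add' := M.add_right f
  map_smul' c := M.smul_right c f

lemma B_sub_right (f g k : Fin n → ℂ[X]) : M.B f (g - k) = M.B f g - M.B f k :=
  map_sub (M.toLinearMap f) g k

lemma B_sum_right {ι : Type*} (f : Fin n → ℂ[X]) (s : Finset ι) (g : ι → Fin n → ℂ[X]) :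
    M.B f (∑ i ∈ s, g i) = ∑ i ∈ s, M.B f (g i) :=
  map_sum (M.toLinearMap f) g s

lemma B_eq_zero_of_B_self_eq_zero {q : Fin n → ℂ[X]} (hq : M.B q q = 0) (f : Fin n → ℂ[X]) :
    M.B f q = 0 := by
  have hcs := InnerProductSpace.Core.inner_mul_inner_self_le (c := M.toCore) f q
  change ‖M.B f q‖ * ‖M.B q f‖ ≤ (M.B f f).re * (M.B q q).re at hcs
  rw [hq, Complex.zero_re, mul_zero, M.conj_symm f q, Complex.norm_conj] at hcs
  exact norm_eq_zero.mp (mul_self_eq_zero.mp (le_antisymm hcs (mul_self_nonneg _)))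

lemma B_X_pow_mul (l : ℕ) (f g : Fin n → ℂ[X]) :
    M.B (fun j => X ^ l * f j) g = M.B f (fun j => X ^ l * g j) := by
  induction l generalizing f with
  | zero => simp
  | succ l ih =>
    simp only [pow_succ, mul_assoc]
    rw [ih, M.mul_symm]
    simp only [← mul_assoc, ← pow_succ, ← pow_succ']

/-- The vector `s - Σ ⟨p_i, s⟩ p_i` that Gram–Schmidt normalizes next. -/
noncomputable def residual {N : ℕ} (p : Fin N → Fin n → ℂ[X]) (s : Fin n → ℂ[X]) :
    Fin n → ℂ[X] :=
  s - ∑ i, M.B (p i) s • p i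

section Orthonormal

variable {M} {N : ℕ} {p : Fin N → Fin n → ℂ[X]}
  (horth : ∀ i j, M.B (p i) (p j) = if i = j then 1 else 0)
include horth

lemma B_residual_right_eq_zero (s : Fin n → ℂ[X]) (i : Fin N) :
    M.B (p i) (M.residual p s) = 0 := by
  simp [residual, B_sub_right, B_sum_right, M.smul_right, horth]

lemma B_residual_left_eq_zero (s : Fin n → ℂ[X]) (i : Fin N) :
    M.B (M.residual p s) (p i) = 0 := by
  rw [M.conj_symm, B_residual_right_eq_zero horth, map_zero]

lemma B_residual_left_eq_zero_of_eq_sum_add {w u : Fin n → ℂ[X]} (c : Fin N → ℂ)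
    (hw : w = ∑ i, c i • p i + u) (hu : M.B u u = 0) (s : Fin n → ℂ[X]) :
    M.B (M.residual p s) w = 0 := by
  simp [hw, M.add_right, B_sum_right, M.smul_right, B_residual_left_eq_zero horth,
    M.B_eq_zero_of_B_self_eq_zero hu]

lemma B_residual_self (s : Fin n → ℂ[X]) :
    M.B (M.residual p s) (M.residual p s) = M.B (M.residual p s) s := by
  change M.B _ (s - ∑ i, M.B (p i) s • p i) = _
  simp [B_sub_right, B_sum_right, M.smul_right, B_residual_left_eq_zero horth]

end Orthonormal

end MatMeasureForm

lemma Polynomial.map_degree_lt_coe_iff {R : Type*} [Semiring R] {f : ℕ → ℕ} (hf : StrictMono f)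
    (P : R[X]) (m : ℕ) :
    WithBot.map f P.degree < (m : WithBot ℕ) ↔ ∀ d, m ≤ f d → P.coeff d = 0 := by
  by_cases hP : P = 0
  · simp [hP]
  simp only [degree_eq_natDegree hP, Nat.cast_withBot, WithBot.map_coe, WithBot.coe_lt_coe]
  constructor
  · intro hlt d hd
    exact coeff_eq_zero_of_natDegree_lt (hf.lt_iff_lt.mp (hlt.trans_le hd))
  · intro hcoeff
    by_contra! hle
    exact leadingCoeff_ne_zero.mpr hP (hcoeff _ hle)

lemma height_lt_iff {n : ℕ} {r : Fin n → ℂ[X]} {m : ℕ} :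
    height r < (m : WithBot ℕ) ↔ ∀ (j : Fin n) d, m ≤ n * d + j → (r j).coeff d = 0 := by
  simp only [height, Finset.sup_lt_iff (Nat.cast_withBot m ▸ WithBot.bot_lt_coe m),
    Finset.mem_univ, true_implies]
  exact forall_congr' fun j =>
    map_degree_lt_coe_iff ((strictMono_mul_left_of_pos j.pos).add_const _) _ _

lemma WithBot.eq_coe_iff_lt_succ {x : WithBot ℕ} {m : ℕ} :
    x = (m : WithBot ℕ) ↔ x < ((m + 1 : ℕ) : WithBot ℕ) ∧ ¬ x < (m : WithBot ℕ) := by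
  cases x with
  | bot => simp
  | coe a =>
    simp only [Nat.cast_withBot, WithBot.coe_lt_coe, WithBot.coe_inj]
    omega

lemma height_X_pow_mul_lt_iff {n : ℕ} {r : Fin n → ℂ[X]} {m l : ℕ} :
    height (fun j => X ^ l * r j) < ((m + n * l : ℕ) : WithBot ℕ) ↔
      height r < (m : WithBot ℕ) := by
  simp only [height_lt_iff, coeff_X_pow_mul']
  constructor
  · intro H j d hd
    simpa using H j (d + l) (by rw [mul_add]; omega)
  · intro H j d hd
    split_ifs with hld
    · obtain ⟨e, rfl⟩ := Nat.exists_eq_add_of_le' hld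
      rw [Nat.add_sub_cancel]
      exact H j e (by rw [mul_add] at hd; omega)
    · rfl

lemma height_X_pow_mul {n : ℕ} {r : Fin n → ℂ[X]} {m : ℕ} (hr : height r = m) (l : ℕ) :
    height (fun j => X ^ l * r j) = ((m + n * l : ℕ) : WithBot ℕ) := by
  rw [WithBot.eq_coe_iff_lt_succ] at hr ⊢
  rwa [Nat.add_right_comm, height_X_pow_mul_lt_iff, height_X_pow_mul_lt_iff]

lemma mul_add_val_eq_iff {n d m : ℕ} (j : Fin n) :
    n * d + j = m ↔ (j : ℕ) = m % n ∧ d = m / n := by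
  rw [and_comm, eq_comm (a := d), eq_comm (a := (j : ℕ)), Nat.div_mod_unique j.pos]
  simp [j.isLt, add_comm]

lemma eVP_coeff {n m : ℕ} (j : Fin n) (d : ℕ) :
    (eVP n m j).coeff d = if n * d + j = m then 1 else 0 := by
  simp only [eVP, apply_ite (coeff · d), coeff_X_pow, coeff_zero, ← ite_and]
  exact if_congr (mul_add_val_eq_iff j).symm rfl rfl

lemma exists_height_eVP_sub_smul_lt {n : ℕ} {r : Fin n → ℂ[X]} {m : ℕ} (hr : height r = m) :
    ∃ c : ℂ, height (eVP n m - c • r) < (m : WithBot ℕ) := by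
  rw [WithBot.eq_coe_iff_lt_succ, height_lt_iff, height_lt_iff] at hr
  obtain ⟨hle, hlead⟩ := hr
  push Not at hlead
  obtain ⟨j₀, d₀, hm, hne⟩ := hlead
  have hm₀ : n * d₀ + j₀ = m := le_antisymm (not_lt.mp fun h => hne (hle j₀ d₀ h)) hm
  refine ⟨((r j₀).coeff d₀)⁻¹, height_lt_iff.mpr fun j d hd => ?_⟩
  simp only [Pi.sub_apply, Pi.smul_apply, coeff_sub, coeff_smul, smul_eq_mul, eVP_coeff]
  rcases hd.eq_or_lt with heq | hlt
  · obtain ⟨rfl, rfl⟩ : j = j₀ ∧ d = d₀ := by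
      rw [mul_add_val_eq_iff] at hm₀
      rw [eq_comm, mul_add_val_eq_iff] at heq
      exact ⟨Fin.ext (heq.1.trans hm₀.1.symm), heq.2.trans hm₀.2.symm⟩
    rw [if_pos heq.symm, inv_mul_cancel₀ hne, sub_self]
  · rw [if_neg hlt.ne', hle j d hlt, mul_zero, sub_zero]

theorem gram_schmidt_null_propagates_general (n : ℕ) (M : MatMeasureForm n) (h l : ℕ)
    (q : Fin n → Polynomial ℂ) (hqnull : M.B q q = 0)
    (hqh : height q = (h : WithBot ℕ))
    (Mn : ℕ) (p : Fin Mn → (Fin n → Polynomial ℂ))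
    (horth : ∀ i j, M.B (p i) (p j) = if i = j then 1 else 0)
    (hspan : ∀ r : Fin n → Polynomial ℂ, height r < ((h + n * l : ℕ) : WithBot ℕ) →
      ∃ (c : Fin Mn → ℂ) (u : Fin n → Polynomial ℂ),
        M.B u u = 0 ∧ r = (∑ i, c i • p i) + u) :
    M.B (eVP n (h + n * l) - ∑ i, M.B (p i) (eVP n (h + n * l)) • p i)
        (eVP n (h + n * l) - ∑ i, M.B (p i) (eVP n (h + n * l)) • p i) = 0 := by
  set s := eVP n (h + n * l)
  set g : Fin n → ℂ[X] := fun j => X ^ l * q j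
  obtain ⟨c, hlow⟩ := exists_height_eVP_sub_smul_lt (height_X_pow_mul hqh l)
  obtain ⟨d, u, hu, hdecomp⟩ := hspan _ hlow
  have hg : M.B (M.residual p s) g = 0 := by
    rw [← M.B_X_pow_mul]
    exact M.B_eq_zero_of_B_self_eq_zero hqnull _
  change M.B (M.residual p s) (M.residual p s) = 0
  calc M.B (M.residual p s) (M.residual p s)
      = M.B (M.residual p s) (c • g + (s - c • g)) := by
        rw [MatMeasureForm.B_residual_self horth, add_sub_cancel]
    _ = 0 := by
        rw [M.add_right, M.smul_right, hg, mul_zero, zero_add]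
        exact MatMeasureForm.B_residual_left_eq_zero_of_eq_sum_add horth d hdecomp hu s

/-- Gram–Schmidt with discarded null vectors: if at step `h+1` the procedure produced a nonzero
null vector polynomial `q` of height `h`, and `{p_i}` are the orthonormal vectors obtained so far
(all of height `< h + n·l`, and spanning together with the null polynomials all vector polynomials
of height `< h + n·l`), then for every `l ≥ 1` the Gram–Schmidt vector produced at step
`h + 1 + n·l` also has zero norm. -/
theorem gram_schmidt_null_propagates (n : ℕ) (M : MatMeasureForm n) (h l : ℕ) (hl : 1 ≤ l)
    (q : Fin n → Polynomial ℂ) (hq0 : q ≠ 0) (hqnull : M.B q q = 0)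
    (hqh : height q = (h : WithBot ℕ))
    (Mn : ℕ) (p : Fin Mn → (Fin n → Polynomial ℂ))
    (horth : ∀ i j, M.B (p i) (p j) = if i = j then 1 else 0)
    (hph : ∀ i, height (p i) < ((h + n * l : ℕ) : WithBot ℕ))
    (hspan : ∀ r : Fin n → Polynomial ℂ, height r < ((h + n * l : ℕ) : WithBot ℕ) →
      ∃ (c : Fin Mn → ℂ) (u : Fin n → Polynomial ℂ),
        M.B u u = 0 ∧ r = (∑ i, c i • p i) + u) :
    M.B (eVP n (h + n * l) - ∑ i, M.B (p i) (eVP n (h + n * l)) • p i)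
        (eVP n (h + n * l) - ∑ i, M.B (p i) (eVP n (h + n * l)) • p i) = 0 :=
  gram_schmidt_null_propagates_general n M h l q hqnull hqh Mn p horth hspan
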